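/- Let N ≥ 2 be an integer with associated lists (α_j)_{j=1,…,μ} and (β_j)_{j=1,…,η}, let r_1, …, r_{φ(N)} be the elements of {1, 2, …, N} coprime to N, and set C_N := N^{φ(N)} · ∏_{p | N} p^{φ(N)/(p−1)}, the product being over the primes dividing N. Then for every real number x ≥ 0, C_N^x · (∏_{j=1}^{φ(N)} Γ(x + r_j/N)/Γ(r_j/N)) / Γ(x+1)^{φ(N)} = (∏_{j=1}^μ Γ(α_j x + 1)) / (∏_{j=1}^η Γ(β_j x + 1)), where Γ denotes the gamma function. -/

import Mathlib

/-
Write `f t = Γ(x + t) / Γ(t)`. Euler's limit formula for `Γ` gives Gauss's multiplication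
formula `∏_{s=1}^{M} f (s / M) = M^{-Mx} Γ(Mx + 1)`. Inclusion–exclusion over the squarefree
divisors `d` of `N` expresses the product of `f (r / N)` over the `r ≤ N` coprime to `N` through
the products over the multiples of `d`, and each of these is a Gauss product with `M = N / d`.
The factors `M^{-Mx}` then combine to `C_N^{-x}`, because
`∑_{d ∣ N} μ(d) (N/d) log (N/d) = φ(N) (log N + ∑_{p ∣ N} log p / (p - 1))`,
which follows by induction on the set of primes.
-/

open Finset

def evenSub (N : ℕ) : Finset (Finset ℕ) :=
  N.primeFactors.powerset.filter fun J => Even J.card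

def oddSub (N : ℕ) : Finset (Finset ℕ) :=
  N.primeFactors.powerset.filter fun J => Odd J.card

def CN (N : ℕ) : ℕ :=
  N ^ N.totient * ∏ p ∈ N.primeFactors, p ^ (N.totient / (p - 1))

open Filter Topology

theorem prod_Icc_one_eq_prod_range {M : Type*} [CommMonoid M] (f : ℕ → M) (n : ℕ) :
    ∏ k ∈ Icc 1 n, f k = ∏ k ∈ range n, f (k + 1) := by
  rw [range_eq_Ico, prod_Ico_add' f 0 n 1]
  rfl

theorem prod_range_mul_eq_prod_prod {M : Type*} [CommMonoid M] (f : ℕ → M) (a b : ℕ) :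
    ∏ k ∈ range (a * b), f k = ∏ i ∈ range a, ∏ j ∈ range b, f (j * a + i) := by
  induction b with
  | zero => simp
  | succ b ih =>
    simp only [Nat.mul_succ, prod_range_add, ih, prod_range_succ, ← prod_mul_distrib]
    exact prod_congr rfl fun i _ => by rw [mul_comm a]

theorem prod_Icc_filter_dvd {M : Type*} [CommMonoid M] (g : ℕ → M) (n : ℕ) {d : ℕ}
    (hd : 0 < d) :
    ∏ r ∈ Icc 1 n with d ∣ r, g r = ∏ s ∈ Icc 1 (n / d), g (d * s) := by
  refine (prod_nbij' (fun s => d * s) (fun r => r / d) ?_ ?_ ?_ ?_ ?_).symm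
  · intro s hs
    simp only [mem_filter, mem_Icc] at hs ⊢
    refine ⟨⟨Nat.mul_pos hd hs.1, ?_⟩, dvd_mul_right d s⟩
    rw [mul_comm]
    exact (Nat.le_div_iff_mul_le hd).1 hs.2
  · intro r hr
    simp only [mem_filter, mem_Icc] at hr ⊢
    exact ⟨(Nat.one_le_div_iff hd).2 (Nat.le_of_dvd hr.1.1 hr.2), Nat.div_le_div_right hr.1.2⟩
  · intro s _
    exact Nat.mul_div_cancel_left s hd
  · intro r hr
    exact Nat.mul_div_cancel' (mem_filter.1 hr).2
  · intro s _
    rfl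

theorem prod_prod_filter_eq_prod_pow {ι κ M : Type*} [CommMonoid M] (A : Finset ι)
    (s : Finset κ) (P : ι → κ → Prop) [∀ i k, Decidable (P i k)] (g : κ → M) :
    ∏ i ∈ A, ∏ k ∈ s with P i k, g k = ∏ k ∈ s, g k ^ #{i ∈ A | P i k} := by
  simp_rw [prod_filter]
  rw [Finset.prod_comm]
  refine prod_congr rfl fun k _ => ?_
  rw [prod_ite, prod_const_one, mul_one, prod_const]

namespace Real

theorem tendsto_rpow_mul_prod_div_add (y : ℝ) (hy : -1 < y) :
    Tendsto (fun n : ℕ => (n : ℝ) ^ y * ∏ k ∈ range n, (k + 1 : ℝ) / (y + 1 + k)) atTop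
      (𝓝 (Gamma (y + 1))) := by
  have hlim : Tendsto (fun n : ℕ => GammaSeq (y + 1) n * ((n + (y + 1)) / n)) atTop
      (𝓝 (Gamma (y + 1) * 1)) := by
    refine (GammaSeq_tendsto_Gamma _).mul ?_
    simpa using (tendsto_natCast_div_add_atTop (y + 1)).inv₀ one_ne_zero
  rw [mul_one] at hlim
  refine hlim.congr' ?_
  filter_upwards [eventually_gt_atTop 0] with n hn
  have hn' : (0 : ℝ) < n := by exact_mod_cast hn
  have hfac : (n.factorial : ℝ) = ∏ k ∈ range n, ((k : ℝ) + 1) := by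
    rw [← prod_range_add_one_eq_factorial]; push_cast; rfl
  have hpos : ∀ k : ℕ, 0 < y + 1 + k := fun k => by linarith [(k.cast_nonneg : (0 : ℝ) ≤ k)]
  have hprod := prod_pos fun k (_ : k ∈ range n) => hpos k
  have hlast := hpos n
  rw [GammaSeq, prod_range_succ, rpow_add_one hn'.ne', prod_div_distrib, hfac]
  field_simp
  ring

theorem GammaSeq_add_div_GammaSeq {x t : ℝ} (ht : 0 < t) (hxt : 0 < x + t) {n : ℕ}
    (hn : 0 < n) :
    GammaSeq (x + t) n / GammaSeq t n
      = (n : ℝ) ^ x * ∏ j ∈ range (n + 1), (t + j) / (x + t + j) := by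
  have hn' : (0 : ℝ) < n := by exact_mod_cast hn
  have h1 : 0 < ∏ j ∈ range (n + 1), (t + j) := prod_pos fun j _ => by positivity
  have h2 : 0 < ∏ j ∈ range (n + 1), (x + t + j) := prod_pos fun j _ => by positivity
  have h3 : 0 < (n : ℝ) ^ t := rpow_pos_of_pos hn' t
  rw [GammaSeq, GammaSeq, rpow_add hn', prod_div_distrib]
  field_simp

theorem prod_Gamma_add_div_Gamma {M : ℕ} (hM : 0 < M) {x : ℝ} (hx : -1 < M * x) :
    ∏ r ∈ Icc 1 M, Gamma (x + r / M) / Gamma (r / M)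
      = (M : ℝ) ^ (-(M * x)) * Gamma (M * x + 1) := by
  have hM' : (0 : ℝ) < M := by exact_mod_cast hM
  set K : ℕ → ℕ := fun n => M * (n + 1) with hK
  have hK_top : Tendsto K atTop atTop :=
    tendsto_atTop_mono (fun n => (Nat.le_succ n).trans (Nat.le_mul_of_pos_left _ hM)) tendsto_id
  have hseq : ∀ᶠ n : ℕ in atTop,
      (n / (n + 1) / M : ℝ) ^ (M * x)
          * ((K n : ℝ) ^ (M * x) * ∏ k ∈ range (K n), (k + 1 : ℝ) / (M * x + 1 + k))
        = ∏ r ∈ range M, GammaSeq (x + (r + 1) / M) n / GammaSeq ((r + 1) / M) n := by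
    filter_upwards [eventually_gt_atTop 0] with n hn
    have hn' : (0 : ℝ) < n := by exact_mod_cast hn
    have hxr : ∀ r : ℕ, 0 < x + (r + 1) / M := fun r => by
      rw [← mul_pos_iff_of_pos_left hM', mul_add, mul_div_cancel₀ _ hM'.ne']
      linarith [(r.cast_nonneg : (0 : ℝ) ≤ r)]
    have hreindex : ∏ r ∈ range M, ∏ j ∈ range (n + 1),
          ((r + 1) / M + j : ℝ) / (x + (r + 1) / M + j)
        = ∏ k ∈ range (K n), (k + 1 : ℝ) / (M * x + 1 + k) := by
      rw [prod_range_mul_eq_prod_prod]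
      refine prod_congr rfl fun r _ => prod_congr rfl fun j _ => ?_
      have hr := hxr r
      push_cast
      field_simp
      ring
    have hpow :
        ((n : ℝ) ^ x) ^ M = (n / (n + 1) / M : ℝ) ^ (M * x) * (K n : ℝ) ^ (M * x) := by
      rw [← mul_rpow (by positivity) (by positivity), ← rpow_natCast, ← rpow_mul hn'.le]
      simp only [hK]
      push_cast
      field_simp
    rw [prod_congr rfl fun r _ => GammaSeq_add_div_GammaSeq (by positivity) (hxr r) hn,
      prod_mul_distrib, prod_const, card_range, hreindex, hpow, mul_assoc]
  have hrhs := ((tendsto_natCast_div_add_atTop (1 : ℝ)).div_const (M : ℝ) |>.rpow_const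
    (p := M * x) (Or.inl (by positivity))).mul ((tendsto_rpow_mul_prod_div_add _ hx).comp hK_top)
  have hlhs : Tendsto
      (fun n : ℕ => ∏ r ∈ range M, GammaSeq (x + (r + 1) / M) n / GammaSeq ((r + 1) / M) n)
      atTop (𝓝 (∏ r ∈ range M, Gamma (x + (r + 1) / M) / Gamma ((r + 1) / M))) :=
    tendsto_finsetProd _ fun r _ => (GammaSeq_tendsto_Gamma _).div (GammaSeq_tendsto_Gamma _)
      (Gamma_pos_of_pos (by positivity)).ne'
  rw [one_div, inv_rpow hM'.le, ← rpow_neg hM'.le] at hrhs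
  rw [prod_Icc_one_eq_prod_range]
  push_cast
  exact tendsto_nhds_unique hlhs (hrhs.congr' hseq)

theorem sum_powerset_neg_one_pow_mul_log {ι : Type*} [DecidableEq ι] (s : Finset ι)
    (a : ι → ℝ) (ha : ∀ i ∈ s, 1 < a i) {y : ℝ} (hy : 0 < y) :
    ∑ J ∈ s.powerset, (-1) ^ #J * ((y / ∏ i ∈ J, a i) * log (y / ∏ i ∈ J, a i))
      = y * (∏ i ∈ s, (1 - (a i)⁻¹)) * (log y + ∑ i ∈ s, log (a i) / (a i - 1)) := by
  induction s using Finset.induction_on generalizing y with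
  | empty => simp
  | insert b s hb ih =>
    have hb1 : 1 < a b := ha b (mem_insert_self b s)
    have ih' := fun y hy => ih (fun i hi => ha i (mem_insert_of_mem hi)) (y := y) hy
    have hins : ∀ J ∈ s.powerset, (-1) ^ #(insert b J) * ((y / ∏ i ∈ insert b J, a i)
          * log (y / ∏ i ∈ insert b J, a i))
        = -((-1) ^ #J * ((y / a b / ∏ i ∈ J, a i) * log (y / a b / ∏ i ∈ J, a i))) := by
      intro J hJ
      have hbJ : b ∉ J := fun h => hb (mem_powerset.1 hJ h)
      rw [card_insert_of_notMem hbJ, prod_insert hbJ, pow_succ, div_div]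
      ring
    rw [sum_powerset_insert hb, sum_congr rfl hins, sum_neg_distrib, ih' y hy,
      ih' _ (div_pos hy (by linarith)), prod_insert hb, sum_insert hb,
      log_div hy.ne' (by linarith)]
    have hb0 : a b ≠ 0 := by linarith
    have hb1' : a b - 1 ≠ 0 := by linarith
    field_simp
    ring

end Real

theorem Nat.div_pos_of_dvd {N d : ℕ} (hN : N ≠ 0) (hd : d ∣ N) : 0 < N / d :=
  Nat.div_pos (Nat.le_of_dvd (Nat.pos_of_ne_zero hN) hd)
    (Nat.pos_of_dvd_of_pos hd (Nat.pos_of_ne_zero hN))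

theorem Nat.sub_one_dvd_totient_of_mem_primeFactors {N p : ℕ} (hp : p ∈ N.primeFactors) :
    p - 1 ∣ N.totient :=
  Nat.totient_prime (Nat.prime_of_mem_primeFactors hp) ▸
    Nat.totient_dvd_of_dvd (Nat.dvd_of_mem_primeFactors hp)

theorem Nat.prod_dvd_of_subset_primeFactors {N : ℕ} {J : Finset ℕ} (hJ : J ⊆ N.primeFactors) :
    ∏ p ∈ J, p ∣ N :=
  (prod_dvd_prod_of_subset J N.primeFactors id hJ).trans N.prod_primeFactors_dvd

theorem Nat.prod_dvd_iff_subset_primeFactors {N r : ℕ} (hr : r ≠ 0) {J : Finset ℕ}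
    (hJ : J ⊆ N.primeFactors) : ∏ p ∈ J, p ∣ r ↔ J ⊆ r.primeFactors := by
  refine ⟨fun h p hp => ?_, fun h => prod_primes_dvd r ?_ ?_⟩
  · exact Nat.mem_primeFactors.2 ⟨Nat.prime_of_mem_primeFactors (hJ hp),
      (dvd_prod_of_mem _ hp).trans h, hr⟩
  · exact fun p hp => (Nat.prime_of_mem_primeFactors (hJ hp)).prime
  · exact fun p hp => Nat.dvd_of_mem_primeFactors (h hp)

theorem sum_evenSub_sub_sum_oddSub {R : Type*} [CommRing R] (N : ℕ) (h : Finset ℕ → R) :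
    ∑ J ∈ evenSub N, h J - ∑ J ∈ oddSub N, h J
      = ∑ J ∈ N.primeFactors.powerset, (-1) ^ #J * h J := by
  rw [← sum_filter_add_sum_filter_not N.primeFactors.powerset (fun J => Even #J), evenSub, oddSub,
    sub_eq_add_neg, ← sum_neg_distrib]
  congr 1
  · exact sum_congr rfl fun J hJ => by rw [(mem_filter.1 hJ).2.neg_one_pow, one_mul]
  · simp only [Nat.not_even_iff_odd]
    exact sum_congr rfl fun J hJ => by rw [(mem_filter.1 hJ).2.neg_one_pow, neg_one_mul]

theorem sum_powerset_primeFactors_filter_dvd_neg_one_pow {N r : ℕ} (hN : N ≠ 0) (hr : r ≠ 0) :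
    ∑ J ∈ N.primeFactors.powerset with ∏ p ∈ J, p ∣ r, (-1 : ℤ) ^ #J
      = if r.Coprime N then 1 else 0 := by
  have hfilter : {J ∈ N.primeFactors.powerset | ∏ p ∈ J, p ∣ r}
      = (N.primeFactors ∩ r.primeFactors).powerset := by
    ext J
    simp only [mem_filter, mem_powerset, subset_inter_iff]
    exact and_congr_right (Nat.prod_dvd_iff_subset_primeFactors hr)
  rw [hfilter, sum_powerset_neg_one_pow_card]
  refine if_congr ?_ rfl rfl
  rw [← disjoint_iff_inter_eq_empty, Nat.disjoint_primeFactors hN hr, Nat.coprime_comm]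

theorem card_evenSub_filter_dvd {N r : ℕ} (hN : N ≠ 0) (hr : r ≠ 0) :
    #{J ∈ evenSub N | ∏ p ∈ J, p ∣ r} = #{J ∈ oddSub N | ∏ p ∈ J, p ∣ r}
      + if r.Coprime N then 1 else 0 := by
  have h := sum_evenSub_sub_sum_oddSub (R := ℤ) N fun J => if ∏ p ∈ J, p ∣ r then 1 else 0
  simp only [mul_ite, mul_one, mul_zero, ← sum_filter, sum_const, nsmul_one,
    sum_powerset_primeFactors_filter_dvd_neg_one_pow hN hr] at h
  split_ifs at h ⊢ <;> omega

-- Inclusion–exclusion, stated without inverses so that it holds in any commutative monoid.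
theorem prod_coprime_mul_prod_oddSub {M : Type*} [CommMonoid M] {N : ℕ} (hN : N ≠ 0)
    {s : Finset ℕ} (hs : 0 ∉ s) (g : ℕ → M) :
    (∏ r ∈ s with r.Coprime N, g r)
        * ∏ J ∈ oddSub N, ∏ r ∈ s with ∏ p ∈ J, p ∣ r, g r
      = ∏ J ∈ evenSub N, ∏ r ∈ s with ∏ p ∈ J, p ∣ r, g r := by
  rw [prod_prod_filter_eq_prod_pow, prod_prod_filter_eq_prod_pow, prod_filter,
    ← prod_mul_distrib]
  refine prod_congr rfl fun r hr => ?_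
  rw [card_evenSub_filter_dvd hN (ne_of_mem_of_not_mem hr hs), pow_add, mul_comm]
  split_ifs <;> simp

theorem log_CN {N : ℕ} (hN : N ≠ 0) :
    Real.log (CN N)
      = N.totient * (Real.log N + ∑ p ∈ N.primeFactors, Real.log p / (p - 1)) := by
  have hp : ∀ p ∈ N.primeFactors, (0 : ℝ) < p := fun p hp => by
    exact_mod_cast (Nat.prime_of_mem_primeFactors hp).pos
  have hexp : ∀ p ∈ N.primeFactors,
      Real.log ((p : ℝ) ^ (N.totient / (p - 1))) = N.totient * (Real.log p / (p - 1)) := by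
    intro p hp'
    have h1 : (1 : ℝ) < p := by exact_mod_cast (Nat.prime_of_mem_primeFactors hp').one_lt
    rw [Real.log_pow, Nat.cast_div (Nat.sub_one_dvd_totient_of_mem_primeFactors hp'),
      Nat.cast_pred (Nat.prime_of_mem_primeFactors hp').pos]
    · ring
    · rw [Nat.cast_pred (Nat.prime_of_mem_primeFactors hp').pos]; linarith
  unfold CN
  push_cast
  rw [Real.log_mul (by positivity) (prod_pos fun p hp' => pow_pos (hp p hp') _).ne',
    Real.log_pow, Real.log_prod fun p hp' => (pow_pos (hp p hp') _).ne', sum_congr rfl hexp,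
    mul_add, mul_sum]

theorem sum_powerset_primeFactors_mul_log {N : ℕ} (hN : N ≠ 0) :
    ∑ J ∈ N.primeFactors.powerset,
        (-1) ^ #J
          * (((N / ∏ p ∈ J, p : ℕ) : ℝ) * Real.log ((N / ∏ p ∈ J, p : ℕ) : ℝ))
      = Real.log (CN N) := by
  have hp : ∀ p ∈ N.primeFactors, (1 : ℝ) < p := fun p hp => by
    exact_mod_cast (Nat.prime_of_mem_primeFactors hp).one_lt
  have hcast : ∀ J ∈ N.primeFactors.powerset,
      ((N / ∏ p ∈ J, p : ℕ) : ℝ) = N / ∏ p ∈ J, (p : ℝ) := fun J hJ => by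
    rw [Nat.cast_div (Nat.prod_dvd_of_subset_primeFactors (mem_powerset.1 hJ)), Nat.cast_prod]
    exact_mod_cast
      (prod_pos fun _ hp => (Nat.prime_of_mem_primeFactors (mem_powerset.1 hJ hp)).pos).ne'
  have htot : (N : ℝ) * ∏ p ∈ N.primeFactors, (1 - (p : ℝ)⁻¹) = N.totient := by
    have := congrArg (Rat.cast (K := ℝ)) (Nat.totient_eq_mul_prod_factors N)
    push_cast at this
    exact this.symm
  rw [sum_congr rfl fun J hJ => by rw [hcast J hJ],
    Real.sum_powerset_neg_one_pow_mul_log _ _ hp (by positivity), htot, log_CN hN]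

theorem CN_rpow_mul_prod_evenSub {N : ℕ} (hN : N ≠ 0) (x : ℝ) :
    (CN N : ℝ) ^ x * ∏ J ∈ evenSub N,
        ((N / ∏ p ∈ J, p : ℕ) : ℝ) ^ (-(((N / ∏ p ∈ J, p : ℕ) : ℝ) * x))
      = ∏ J ∈ oddSub N,
          ((N / ∏ p ∈ J, p : ℕ) : ℝ) ^ (-(((N / ∏ p ∈ J, p : ℕ) : ℝ) * x)) := by
  have hM : ∀ J ∈ N.primeFactors.powerset, (0 : ℝ) < (N / ∏ p ∈ J, p : ℕ) := fun J hJ =>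
    Nat.cast_pos.2 <|
      Nat.div_pos_of_dvd hN (Nat.prod_dvd_of_subset_primeFactors (mem_powerset.1 hJ))
  have hC : (0 : ℝ) < CN N :=
    Nat.cast_pos.2 <| Nat.mul_pos (Nat.pow_pos (Nat.pos_of_ne_zero hN))
      (prod_pos fun _ hp => Nat.pow_pos (Nat.prime_of_mem_primeFactors hp).pos)
  have hlog := sum_evenSub_sub_sum_oddSub N fun J =>
    ((N / ∏ p ∈ J, p : ℕ) : ℝ) * Real.log ((N / ∏ p ∈ J, p : ℕ) : ℝ)
  rw [sum_powerset_primeFactors_mul_log hN] at hlog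
  have hexp : ∀ J ∈ N.primeFactors.powerset,
      ((N / ∏ p ∈ J, p : ℕ) : ℝ) ^ (-(((N / ∏ p ∈ J, p : ℕ) : ℝ) * x))
        = Real.exp (-x *
            (((N / ∏ p ∈ J, p : ℕ) : ℝ) * Real.log ((N / ∏ p ∈ J, p : ℕ) : ℝ))) :=
    fun J hJ => by rw [Real.rpow_def_of_pos (hM J hJ)]; ring_nf
  rw [prod_congr rfl fun J (hJ : J ∈ evenSub N) => hexp J (filter_subset _ _ hJ),
    prod_congr rfl fun J (hJ : J ∈ oddSub N) => hexp J (filter_subset _ _ hJ),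
    ← Real.exp_sum, ← Real.exp_sum, Real.rpow_def_of_pos hC, ← Real.exp_add, ← mul_sum,
    ← mul_sum]
  congr 1
  linear_combination (-x) * hlog

theorem prod_Icc_filter_dvd_Gamma_div_Gamma {N d : ℕ} (hN : N ≠ 0) (hd : d ∣ N) {x : ℝ}
    (hx : -1 < ((N / d : ℕ) : ℝ) * x) :
    ∏ r ∈ Icc 1 N with d ∣ r, Real.Gamma (x + (r : ℝ) / N) / Real.Gamma ((r : ℝ) / N)
      = ((N / d : ℕ) : ℝ) ^ (-(((N / d : ℕ) : ℝ) * x))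
          * Real.Gamma (((N / d : ℕ) : ℝ) * x + 1) := by
  have hd0 : 0 < d := Nat.pos_of_dvd_of_pos hd (Nat.pos_of_ne_zero hN)
  have hrescale : ∀ s : ℕ, ((d * s : ℕ) : ℝ) / N = s / ((N / d : ℕ) : ℝ) := fun s => by
    rw [Nat.cast_div hd (by positivity)]
    field_simp
    push_cast
    ring
  rw [prod_Icc_filter_dvd _ _ hd0]
  simp only [hrescale]
  exact Real.prod_Gamma_add_div_Gamma (Nat.div_pos_of_dvd hN hd) hx

/-- Gamma-function identity (Krattenthaler–Rivoal, Eq. (rajout3)): for `N ≥ 2` and real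
`x ≥ 0`,
`C_N^x · (∏_j Γ(x + r_j/N)/Γ(r_j/N)) / Γ(x+1)^{φ(N)} = (∏_j Γ(α_j x + 1))/(∏_j Γ(β_j x + 1))`,
where `r_1, …, r_{φ(N)}` are the elements of `{1, …, N}` coprime to `N` and the list
`β` carries `φ(N)` padded entries `1`, contributing `Γ(x+1)^{φ(N)}` to the denominator. -/
theorem gamma_identity (N : ℕ) (hN : 2 ≤ N) (x : ℝ) (hx : 0 ≤ x) :
    (CN N : ℝ) ^ x *
        (∏ r ∈ (Finset.Icc 1 N).filter fun r => Nat.Coprime r N,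
          Real.Gamma (x + (r : ℝ) / N) / Real.Gamma ((r : ℝ) / N)) /
        (Real.Gamma (x + 1)) ^ N.totient
      = (∏ J ∈ evenSub N, Real.Gamma (((N / ∏ p ∈ J, p : ℕ) : ℝ) * x + 1)) /
        ((∏ J ∈ oddSub N, Real.Gamma (((N / ∏ p ∈ J, p : ℕ) : ℝ) * x + 1)) *
          (Real.Gamma (x + 1)) ^ N.totient) := by
  have hN0 : N ≠ 0 := by omega
  have hdvd : ∀ J ∈ N.primeFactors.powerset, ∏ p ∈ J, p ∣ N := fun J hJ =>
    Nat.prod_dvd_of_subset_primeFactors (mem_powerset.1 hJ)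
  have hblock := fun J (hJ : J ∈ N.primeFactors.powerset) =>
    prod_Icc_filter_dvd_Gamma_div_Gamma hN0 (hdvd J hJ) (x := x)
      (neg_one_lt_zero.trans_le (by positivity))
  have hIE := prod_coprime_mul_prod_oddSub hN0 (s := Icc 1 N) (by simp)
    fun r => Real.Gamma (x + (r : ℝ) / N) / Real.Gamma ((r : ℝ) / N)
  rw [prod_congr rfl fun J (hJ : J ∈ evenSub N) => hblock J (filter_subset _ _ hJ),
    prod_congr rfl fun J (hJ : J ∈ oddSub N) => hblock J (filter_subset _ _ hJ),
    prod_mul_distrib, prod_mul_distrib] at hIE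
  have hC := CN_rpow_mul_prod_evenSub hN0 x
  set P :=
    ∏ r ∈ Icc 1 N with r.Coprime N, Real.Gamma (x + (r : ℝ) / N) / Real.Gamma ((r : ℝ) / N)
  set G := Real.Gamma (x + 1) ^ N.totient
  set O := ∏ J ∈ oddSub N, Real.Gamma (((N / ∏ p ∈ J, p : ℕ) : ℝ) * x + 1)
  set F :=
    ∏ J ∈ evenSub N,
      ((N / ∏ p ∈ J, p : ℕ) : ℝ) ^ (-(((N / ∏ p ∈ J, p : ℕ) : ℝ) * x))
  have hG : G ≠ 0 := pow_ne_zero _ (Real.Gamma_pos_of_pos (by linarith)).ne'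
  have hO : O ≠ 0 := prod_ne_zero_iff.2 fun J _ => (Real.Gamma_pos_of_pos (by positivity)).ne'
  have hF : F ≠ 0 := prod_ne_zero_iff.2 fun J hJ => (Real.rpow_pos_of_pos (Nat.cast_pos.2
    (Nat.div_pos_of_dvd hN0 (hdvd J (filter_subset _ _ hJ)))) _).ne'
  rw [div_eq_div_iff hG (mul_ne_zero hO hG)]
  refine mul_right_cancel₀ hF ?_
  linear_combination (G * P * O) * hC + G * hIE
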